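/- The number of (k,ℓ)-pullback (m,n)-parking functions with outcome π ∈ S_{m,n} equals the product over i = 1 to n of (B(π_i) + F(π_i) + 1), where for π_i = 0 the factor is 1 (B(0)=F(0)=0). -/

import Mathlib

/-- Try to park a car with preference `a` under the `(k,l)`-pullback rule on a
street with spots `1,…,n`, where `occ` is the set of occupied spots.  The car
parks at `a` if it is free; otherwise it checks `a-1,…,a-k` (not before spot 1)
and parks in the first free spot found; failing that it checks `a+1,…,a+l`
(not beyond spot `n`).  Returns the spot where the car parks, if any. -/
def pullTry (k l n : ℕ) (occ : Finset ℕ) (a : ℕ) : Option ℕ :=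
  if a ∉ occ then some a
  else
    match ((List.range k).map (fun j => a - (j + 1))).find?
        (fun s => decide (1 ≤ s ∧ s ∉ occ)) with
    | some s => some s
    | none =>
        ((List.range l).map (fun j => a + (j + 1))).find?
          (fun s => decide (s ≤ n ∧ s ∉ occ))

/-- Park a list of cars sequentially by the `(k,l)`-pullback rule, returning the
list of spots where they park (in order) if all of them park. -/
def pullRunAux (k l n : ℕ) : List ℕ → Finset ℕ → Option (List ℕ)
  | [], _ => some []
  | a :: rest, occ =>
    match pullTry k l n occ a with
    | none => none
    | some s => (pullRunAux k l n rest (insert s occ)).map (fun t => s :: t)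

def pullRun (k l n : ℕ) (prefs : List ℕ) : Option (List ℕ) :=
  pullRunAux k l n prefs ∅

/-- The `k`-Naples rule: back up at most `k` spots, then drive forward all the
way to spot `n`. -/
def naplesTry (k n : ℕ) (occ : Finset ℕ) (a : ℕ) : Option ℕ :=
  if a ∉ occ then some a
  else
    match ((List.range k).map (fun j => a - (j + 1))).find?
        (fun s => decide (1 ≤ s ∧ s ∉ occ)) with
    | some s => some s
    | none => (List.range' (a + 1) (n - a)).find? (fun s => decide (s ∉ occ))

def naplesRunAux (k n : ℕ) : List ℕ → Finset ℕ → Option (List ℕ)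
  | [], _ => some []
  | a :: rest, occ =>
    match naplesTry k n occ a with
    | none => none
    | some s => (naplesRunAux k n rest (insert s occ)).map (fun t => s :: t)

def naplesRun (k n : ℕ) (prefs : List ℕ) : Option (List ℕ) :=
  naplesRunAux k n prefs ∅

/-- The classical rule: park in the first free spot among `a, a+1, …, n`. -/
def classicalTry (n : ℕ) (occ : Finset ℕ) (a : ℕ) : Option ℕ :=
  (List.range' a (n + 1 - a)).find? (fun s => decide (s ∉ occ))

def classicalRunAux (n : ℕ) : List ℕ → Finset ℕ → Option (List ℕ)
  | [], _ => some []
  | a :: rest, occ =>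
    match classicalTry n occ a with
    | none => none
    | some s => (classicalRunAux n rest (insert s occ)).map (fun t => s :: t)

def classicalRun (n : ℕ) (prefs : List ℕ) : Option (List ℕ) :=
  classicalRunAux n prefs ∅

/-- The list of (1-based) preferences encoded by a tuple `α ∈ [n]^m`. -/
def prefList {m n : ℕ} (α : Fin m → Fin n) : List ℕ :=
  List.ofFn (fun i => (α i : ℕ) + 1)

/-- The finset of `(k,l)`-pullback `(m,n)`-parking functions. -/
def pullPFs (k l m n : ℕ) : Finset (Fin m → Fin n) :=
  Finset.univ.filter (fun α => (pullRun k l n (prefList α)).isSome = true)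

/-- The finset of `k`-Naples `(m,n)`-parking functions. -/
def naplesPFs (k m n : ℕ) : Finset (Fin m → Fin n) :=
  Finset.univ.filter (fun α => (naplesRun k n (prefList α)).isSome = true)

/-- The finset of classical `(m,n)`-parking functions. -/
def classicalPFs (m n : ℕ) : Finset (Fin m → Fin n) :=
  Finset.univ.filter (fun α => (classicalRun n (prefList α)).isSome = true)

/-- `outcomeOf spots i = j+1` if car `j+1` (0-indexed `j`) parked in spot `i`,
and `0` if spot `i` is vacant.  Here `spots` lists the spots of cars `1,…,m`. -/
def outcomeOf (spots : List ℕ) (i : ℕ) : ℕ :=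
  match spots.findIdx? (· == i) with
  | some j => j + 1
  | none => 0

/-- The outcome of a `(k,l)`-pullback parking function, as a function sending
the (0-based) spot index `i` to the label of the car parked in spot `i+1`
(or `0` if vacant). -/
def pullOutcome (k l n : ℕ) {m : ℕ} (α : Fin m → Fin n) : Fin n → ℕ :=
  fun i => outcomeOf ((pullRun k l n (prefList α)).getD []) ((i : ℕ) + 1)

/-- The outcome of a classical parking function. -/
def classicalOutcome (n : ℕ) {m : ℕ} (α : Fin m → Fin n) : Fin n → ℕ :=
  fun i => outcomeOf ((classicalRun n (prefList α)).getD []) ((i : ℕ) + 1)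

/-- `S_{m,n}`: arrangements of the multiset `{0,…,0} ∪ [m]` with `n - m`
zeros, as functions on the `n` positions. -/
def SmnSet (m n : ℕ) : Finset (Fin n → ℕ) :=
  ((Finset.univ : Finset (Fin n → Fin (m + 1))).image
      (fun π i => (π i : ℕ))).filter
    (fun π => Finset.univ.val.map π =
      Multiset.replicate (n - m) 0 + (Multiset.range m).map (· + 1))

/-- Read an arrangement `π` at the 1-based position `t` (zero outside `[1,n]`). -/
def at1 {n : ℕ} (π : Fin n → ℕ) (t : ℕ) : ℕ :=
  if h : 1 ≤ t ∧ t ≤ n then π ⟨t - 1, by omega⟩ else 0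

/-- The spots occupied by the cars with labels `< c` (those that parked before
car `c`), as read off from the outcome `π`. -/
def occBefore {n : ℕ} (π : Fin n → ℕ) (c : ℕ) : Finset ℕ :=
  (Finset.Icc 1 n).filter (fun s => 0 < at1 π s ∧ at1 π s < c)

/-- `Right(π_i)`: the length of the longest consecutive run
`π_{i+1}, …, π_{i+x}` with `0 < π_t < π_i` throughout. -/
def rightRun {n : ℕ} (π : Fin n → ℕ) (i : ℕ) : ℕ :=
  Nat.findGreatest
    (fun x => ∀ t ∈ Finset.Icc (i + 1) (i + x), 0 < at1 π t ∧ at1 π t < at1 π i) n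

/-- `Left(π_i)`: the length of the longest consecutive run
`π_{i-x}, …, π_{i-1}` with `0 < π_t < π_i` throughout. -/
noncomputable def leftRun {n : ℕ} (π : Fin n → ℕ) (i : ℕ) : ℕ :=
  @Nat.findGreatest
    (fun x => ∀ t ∈ Finset.Icc (i - x) (i - 1), 0 < at1 π t ∧ at1 π t < at1 π i)
    (fun _ => Classical.propDecidable _) n

/-- `B(π_i) = min(Right(π_i), k)`. -/
def Bval (k : ℕ) {n : ℕ} (π : Fin n → ℕ) (i : ℕ) : ℕ :=
  min (rightRun π i) k

/-- `F(π_i)`, defined by cases: `0` if `Left(π_i) = 0`; `min(i-1, l)` if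
`Left(π_i) = i-1 > 0`; and `max(min(Left(π_i) - k, l), 0)` (truncated
subtraction) if `0 < Left(π_i) < i-1`. -/
noncomputable def Fval (k l : ℕ) {n : ℕ} (π : Fin n → ℕ) (i : ℕ) : ℕ :=
  if leftRun π i = 0 then 0
  else if leftRun π i = i - 1 then min (i - 1) l
  else min (leftRun π i - k) l

/-- `L(σ_i)`: the length of the longest consecutive run of `σ` ending at
position `i` all of whose entries are at most `σ_i`. -/
noncomputable def Lrun {n : ℕ} (σ : Fin n → ℕ) (i : ℕ) : ℕ :=
  @Nat.findGreatest
    (fun x => ∀ t ∈ Finset.Icc (i - x + 1) i, at1 σ t ≤ at1 σ i)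
    (fun _ => Classical.propDecidable _) n

/-!
Fix the outcome `π`. Car `c` must end in the spot `i` labelled `c`, and when it arrives the occupied
spots are exactly those labelled below `c`, which depend on `π` alone. So `α` has outcome `π` iff
every car's preference lies in the set of preferences that the pullback rule sends to its spot for
that occupancy; the conditions are independent, and the count is a product over the cars. Around
`i` the occupied spots form a run of length `Right(π_i)` to the right and `Left(π_i)` to the left,
and following the rule through these runs shows that the admissible preferences are exactly the
interval `[i - F(π_i), i + B(π_i)]`.
-/

namespace List

theorem find?_map_range_add_eq_some_iff {p : ℕ → Bool} {a k s : ℕ} :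
    ((range k).map (fun j => a + (j + 1))).find? p = some s ↔
      p s ∧ a < s ∧ s ≤ a + k ∧ ∀ t, a < t → t < s → p t = false := by
  simp only [find?_map, Option.map_eq_some_iff, find?_range_eq_some, mem_range,
    Function.comp_apply, Bool.not_eq_true']
  constructor
  · rintro ⟨j, ⟨hp, hj, hmin⟩, rfl⟩
    refine ⟨hp, by omega, by omega, fun t ht hts => ?_⟩
    simpa [show a + (t - a - 1 + 1) = t by omega] using hmin (t - a - 1) (by omega)
  · rintro ⟨hp, has, hsk, hmin⟩
    exact ⟨s - a - 1, ⟨by rwa [show a + (s - a - 1 + 1) = s by omega],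
      by omega, fun j hj => hmin _ (by omega) (by omega)⟩, by omega⟩

/-- The hypothesis on `0` covers the entries `a - (j + 1)` truncated to `0` when `j ≥ a`. -/
theorem find?_map_range_sub_eq_some_iff {p : ℕ → Bool} (hp0 : p 0 = false) {a k s : ℕ} :
    ((range k).map (fun j => a - (j + 1))).find? p = some s ↔
      p s ∧ s < a ∧ a ≤ s + k ∧ ∀ t, s < t → t < a → p t = false := by
  simp only [find?_map, Option.map_eq_some_iff, find?_range_eq_some, mem_range,
    Function.comp_apply, Bool.not_eq_true']
  constructor
  · rintro ⟨j, ⟨hp, hj, hmin⟩, rfl⟩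
    have hja : j < a := by
      by_contra h
      rw [show a - (j + 1) = 0 by omega, hp0] at hp
      exact Bool.false_ne_true hp
    refine ⟨hp, by omega, by omega, fun t ht hts => ?_⟩
    simpa [show a - (a - t - 1 + 1) = t by omega] using hmin (a - t - 1) (by omega)
  · rintro ⟨hp, hsa, hsk, hmin⟩
    exact ⟨a - s - 1, ⟨by rwa [show a - (a - s - 1 + 1) = s by omega],
      by omega, fun j hj => hmin _ (by omega) (by omega)⟩, by omega⟩

theorem find?_map_range_sub_eq_none_iff {p : ℕ → Bool} (hp0 : p 0 = false) {a k : ℕ} :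
    ((range k).map (fun j => a - (j + 1))).find? p = none ↔
      ∀ t, t < a → a ≤ t + k → p t = false := by
  simp only [find?_map, Option.map_eq_none_iff, find?_range_eq_none, Function.comp_apply,
    Bool.not_eq_true']
  constructor
  · intro h t hta htk
    simpa [show a - (a - t - 1 + 1) = t by omega] using h (a - t - 1) (by omega)
  · intro h j hj
    by_cases hja : j < a
    · exact h _ (by omega) (by omega)
    · rwa [show a - (j + 1) = 0 by omega]

end List

section PullbackRule

variable {k l n : ℕ} {occ : Finset ℕ} {a s : ℕ}

theorem pullTry_eq_some_iff :
    pullTry k l n occ a = some s ↔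
      (a ∉ occ ∧ s = a) ∨
      (a ∈ occ ∧ 1 ≤ s ∧ s ∉ occ ∧ s < a ∧ a ≤ s + k ∧ ∀ t, s < t → t < a → t ∈ occ) ∨
      (a ∈ occ ∧ (∀ t, t < a → a ≤ t + k → 1 ≤ t → t ∈ occ) ∧
        s ≤ n ∧ s ∉ occ ∧ a < s ∧ s ≤ a + l ∧ ∀ t, a < t → t < s → t ∈ occ) := by
  have hp0 : decide (1 ≤ 0 ∧ 0 ∉ occ) = false := by simp
  by_cases ha : a ∈ occ
  · rw [pullTry, if_neg (not_not.mpr ha)]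
    rcases hb : ((List.range k).map (fun j => a - (j + 1))).find?
        (fun s => decide (1 ≤ s ∧ s ∉ occ)) with _ | s'
    · rw [List.find?_map_range_sub_eq_none_iff hp0] at hb
      simp only [decide_eq_false_iff_not, not_and, not_not] at hb
      simp only [List.find?_map_range_add_eq_some_iff, decide_eq_true_eq,
        decide_eq_false_iff_not, not_and, not_not]
      constructor
      · rintro ⟨⟨hsn, hso⟩, has, hsl, hmin⟩
        exact Or.inr (Or.inr ⟨ha, hb, hsn, hso, has, hsl, fun t h1 h2 => hmin t h1 h2 (by omega)⟩)
      · rintro (⟨hna, -⟩ | ⟨-, hs1, hso, hsa, hsk, -⟩ | ⟨-, -, hsn, hso, has, hsl, hmin⟩)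
        · exact absurd ha hna
        · exact absurd (hb s hsa hsk hs1) hso
        · exact ⟨⟨hsn, hso⟩, has, hsl, fun t h1 h2 _ => hmin t h1 h2⟩
    · rw [List.find?_map_range_sub_eq_some_iff hp0] at hb
      simp only [decide_eq_true_eq, decide_eq_false_iff_not, not_and, not_not] at hb
      obtain ⟨⟨hs1', hso'⟩, hsa', hsk', hmin'⟩ := hb
      rw [Option.some_inj]
      constructor
      · rintro rfl
        exact Or.inr (Or.inl ⟨ha, hs1', hso', hsa', hsk', fun t h1 h2 => hmin' t h1 h2 (by omega)⟩)
      · rintro (⟨hna, -⟩ | ⟨-, hs1, hso, hsa, hsk, hmin⟩ | ⟨-, hblock, -⟩)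
        · exact absurd ha hna
        · rcases lt_trichotomy s' s with h | h | h
          · exact absurd (hmin' s h hsa hs1) hso
          · exact h
          · exact absurd (hmin s' h hsa') hso'
        · exact absurd (hblock s' hsa' hsk' hs1') hso'
  · simp [pullTry, ha, eq_comm]

theorem pullTry_eq_some_bounds (h : pullTry k l n occ a = some s) (ha1 : 1 ≤ a) (han : a ≤ n) :
    1 ≤ s ∧ s ≤ n ∧ s ∉ occ := by
  rcases pullTry_eq_some_iff.mp h with ⟨ha, rfl⟩ | ⟨-, hs1, hso, hsa, -⟩ | ⟨-, -, hsn, hso, has, -⟩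
  · exact ⟨ha1, han, ha⟩
  · exact ⟨hs1, by omega, hso⟩
  · exact ⟨by omega, hsn, hso⟩

end PullbackRule

/-- `F(π_i)` for `L = Left(π_i)`: how far behind spot `i` a preference may lie and still lead to
`i`. -/
def forwardReach (k l i L : ℕ) : ℕ :=
  if L = 0 then 0 else if L = i - 1 then min (i - 1) l else min (L - k) l

section Runs

variable {k l n : ℕ} {occ : Finset ℕ} {i R L : ℕ}

theorem forall_right_mem_iff (hR : ∀ t, i < t → t ≤ i + R → t ∈ occ) (hR' : i + R + 1 ∉ occ)
    (b : ℕ) : (∀ t, i < t → t ≤ b → t ∈ occ) ↔ b ≤ i + R :=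
  ⟨fun h => by by_contra; exact hR' (h _ (by omega) (by omega)),
    fun h t h1 h2 => hR t h1 (by omega)⟩

theorem forall_left_mem_iff (hL : ∀ t, i - L ≤ t → t < i → t ∈ occ) (hL' : i - (L + 1) ∉ occ)
    (b : ℕ) : (∀ t, b ≤ t → t < i → t ∈ occ) ↔ i ≤ b + L :=
  ⟨fun h => by by_contra; exact hL' (h _ (by omega) (by omega)),
    fun h t h1 h2 => hL t (by omega) h2⟩

theorem forall_backward_mem_iff (hL : ∀ t, i - L ≤ t → t < i → t ∈ occ) (hL' : i - (L + 1) ∉ occ)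
    (hLi : L ≤ i - 1) {a : ℕ} (hai : a < i) (haL : i ≤ a + L) :
    (∀ t, t < a → a ≤ t + k → 1 ≤ t → t ∈ occ) ↔ (L = i - 1 ∨ i + k ≤ a + L) := by
  constructor
  · intro hblock
    by_contra! h
    exact hL' (hblock _ (by omega) (by omega) (by omega))
  · rintro h t hta hak ht1
    exact hL t (by omega) (by omega)

theorem pullTry_eq_some_iff_mem_Icc (hi1 : 1 ≤ i) (hin : i ≤ n) (hio : i ∉ occ)
    (h0 : 0 ∉ occ) (hR : ∀ t, i < t → t ≤ i + R → t ∈ occ) (hR' : i + R + 1 ∉ occ)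
    (hL : ∀ t, i - L ≤ t → t < i → t ∈ occ) (hL' : i - (L + 1) ∉ occ) (a : ℕ) :
    pullTry k l n occ a = some i ↔ i - forwardReach k l i L ≤ a ∧ a ≤ i + min R k := by
  have hLi : L ≤ i - 1 := by
    by_contra
    exact h0 (hL 0 (by omega) (by omega))
  rw [pullTry_eq_some_iff]
  rcases lt_trichotomy a i with hai | rfl | hai
  · calc _ ↔ (∀ t, a ≤ t → t < i → t ∈ occ) ∧
            (∀ t, t < a → a ≤ t + k → 1 ≤ t → t ∈ occ) ∧ i ≤ a + l := by
          constructor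
          · rintro (⟨-, rfl⟩ | ⟨-, -, -, hia, -⟩ | ⟨ha, hblock, -, -, -, hil, hmid⟩)
            · omega
            · omega
            · refine ⟨fun t hat hti => ?_, hblock, hil⟩
              rcases hat.eq_or_lt with rfl | hat
              exacts [ha, hmid t hat hti]
          · rintro ⟨hrun, hblock, hil⟩
            exact Or.inr (Or.inr ⟨hrun a le_rfl hai, hblock, hin, hio, hai, hil,
              fun t hat hti => hrun t hat.le hti⟩)
      _ ↔ i ≤ a + L ∧ (L = i - 1 ∨ i + k ≤ a + L) ∧ i ≤ a + l := by
          rw [forall_left_mem_iff hL hL']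
          exact and_congr_right fun haL =>
            and_congr_left' (forall_backward_mem_iff hL hL' hLi hai haL)
      _ ↔ _ := by unfold forwardReach; split_ifs <;> omega
  · simp only [hio, not_false_eq_true, and_self, true_or, true_iff]
    omega
  · calc _ ↔ (∀ t, i < t → t ≤ a → t ∈ occ) ∧ a ≤ i + k := by
          constructor
          · rintro (⟨-, rfl⟩ | ⟨ha, -, -, -, hak, hmid⟩ | ⟨-, -, -, -, hia, -⟩)
            · omega
            · refine ⟨fun t hit hta => ?_, hak⟩
              rcases hta.eq_or_lt with rfl | hta
              exacts [ha, hmid t hit hta]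
            · omega
          · rintro ⟨hrun, hak⟩
            exact Or.inr (Or.inl ⟨hrun a hai le_rfl, hi1, hio, hai, hak,
              fun t hit hta => hrun t hit hta.le⟩)
      _ ↔ _ := by rw [forall_right_mem_iff hR hR']; omega

end Runs

section Run

variable {k l n : ℕ}

theorem pullRunAux_cons_eq_some_iff {a : ℕ} {r t : List ℕ} {occ : Finset ℕ} :
    pullRunAux k l n (a :: r) occ = some t ↔ ∃ s t', t = s :: t' ∧
      pullTry k l n occ a = some s ∧ pullRunAux k l n r (insert s occ) = some t' := by
  simp only [pullRunAux]
  split <;> simp_all [eq_comm, and_comm]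

theorem pullRunAux_eq_some_iff {r t : List ℕ} {occ : Finset ℕ} :
    pullRunAux k l n r occ = some t ↔ t.length = r.length ∧
      ∀ j (hj : j < r.length) (hj' : j < t.length),
        pullTry k l n (occ ∪ (t.take j).toFinset) r[j] = some t[j] := by
  induction r generalizing occ t with
  | nil => cases t <;> simp [pullRunAux]
  | cons a rest ih =>
    rw [pullRunAux_cons_eq_some_iff]
    constructor
    · rintro ⟨s, t', rfl, hs, hrest⟩
      obtain ⟨hlen, hrest⟩ := ih.mp hrest
      refine ⟨by simp [hlen], fun j hj hj' => ?_⟩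
      cases j with
      | zero => simpa using hs
      | succ j =>
        simpa [Finset.union_insert, Finset.insert_union] using
          hrest j (Nat.lt_of_succ_lt_succ hj) (Nat.lt_of_succ_lt_succ hj')
    · rintro ⟨hlen, h⟩
      obtain _ | ⟨s, t'⟩ := t
      · simp at hlen
      have hs := h 0 (Nat.zero_lt_succ _) (Nat.zero_lt_succ _)
      refine ⟨s, t', rfl, by simpa using hs, ih.mpr ⟨by simpa using hlen, fun j hj hj' => ?_⟩⟩
      have := h (j + 1) (Nat.succ_lt_succ hj) (Nat.succ_lt_succ hj')
      simpa [Finset.union_insert, Finset.insert_union] using this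

end Run

theorem outcomeOf_getElem {t : List ℕ} (ht : t.Nodup) {j : ℕ} (hj : j < t.length) :
    outcomeOf t t[j] = j + 1 := by
  have : t.findIdx? (· == t[j]) = some j := by
    rw [List.findIdx?_eq_some_iff_getElem]
    refine ⟨hj, by simp, fun i hij => ?_⟩
    simpa using (ht.getElem_inj_iff (i := i) (j := j)).not.mpr (by omega)
  simp [outcomeOf, this]

theorem outcomeOf_eq_zero {t : List ℕ} {s : ℕ} (hs : s ∉ t) : outcomeOf t s = 0 := by
  have : t.findIdx? (· == s) = none := by
    rw [List.findIdx?_eq_none_iff]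
    intro x hx
    simpa using ne_of_mem_of_not_mem hx hs
  simp [outcomeOf, this]

theorem pullRunAux_empty_spots {k l n : ℕ} {r t : List ℕ} (h : pullRunAux k l n r ∅ = some t)
    (hr : ∀ a ∈ r, 1 ≤ a ∧ a ≤ n) : t.Nodup ∧ ∀ j (hj : j < t.length), 1 ≤ t[j] ∧ t[j] ≤ n := by
  obtain ⟨hlen, hstep⟩ := pullRunAux_eq_some_iff.mp h
  have hspot : ∀ j (hj : j < t.length), 1 ≤ t[j] ∧ t[j] ≤ n ∧ t[j] ∉ t.take j := fun j hj => by
    have hrj := hr r[j] (List.getElem_mem _)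
    simpa using pullTry_eq_some_bounds (hstep j (hlen ▸ hj) hj) hrj.1 hrj.2
  refine ⟨List.pairwise_iff_getElem.mpr fun i j hi hj hij heq => ?_,
    fun j hj => ⟨(hspot j hj).1, (hspot j hj).2.1⟩⟩
  apply (hspot j hj).2.2
  rw [← heq, List.mem_take_iff_getElem]
  exact ⟨i, by simp [hij, hi], rfl⟩

section Arrangement

variable {m n : ℕ} {π : Fin n → ℕ}

theorem le_of_mem_SmnSet (hπ : π ∈ SmnSet m n) (x : Fin n) : π x ≤ m := by
  obtain ⟨π', -, rfl⟩ := Finset.mem_image.mp (Finset.mem_filter.mp hπ).1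
  exact Nat.lt_succ_iff.mp (π' x).isLt

theorem existsUnique_eq_of_mem_SmnSet (hπ : π ∈ SmnSet m n) {c : ℕ} (h1 : 1 ≤ c) (h2 : c ≤ m) :
    ∃! x, π x = c := by
  have hcount : (Finset.univ.val.map π).count c = 1 := by
    rw [(Finset.mem_filter.mp hπ).2, Multiset.count_add, Multiset.count_replicate,
      if_neg (by omega), zero_add, ← Nat.sub_add_cancel h1,
      Multiset.count_map_eq_count' _ _ (add_left_injective 1)]
    exact Multiset.count_eq_one_of_mem (Multiset.nodup_range m) (Multiset.mem_range.mpr (by omega))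
  rw [Fintype.existsUnique_iff_card_one, ← hcount, Multiset.count_map]
  simp [Finset.card_def, eq_comm]

end Arrangement

section Spots

variable {m n : ℕ} {π : Fin n → ℕ}

@[simp]
theorem at1_val_add_one (π : Fin n → ℕ) (x : Fin n) : at1 π (x + 1) = π x := by
  simp [at1]

@[simp]
theorem at1_zero (π : Fin n → ℕ) : at1 π 0 = 0 := by
  simp [at1]

theorem exists_eq_val_add_one_of_at1_pos {s : ℕ} (h : 0 < at1 π s) : ∃ x : Fin n, s = x + 1 := by
  unfold at1 at h
  split_ifs at h with hs
  · exact ⟨⟨s - 1, by omega⟩, by simp; omega⟩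
  · omega

theorem mem_occBefore {c s : ℕ} : s ∈ occBefore π c ↔ 0 < at1 π s ∧ at1 π s < c := by
  rw [occBefore, Finset.mem_filter, Finset.mem_Icc, and_iff_right_iff_imp]
  rintro ⟨h, -⟩
  obtain ⟨x, rfl⟩ := exists_eq_val_add_one_of_at1_pos h
  omega

theorem zero_notMem_occBefore (c : ℕ) : 0 ∉ occBefore π c := by
  simp [mem_occBefore]

theorem occBefore_zero : occBefore π 0 = ∅ := by
  ext s
  simp [mem_occBefore]

theorem mem_occBefore_of_le_rightRun {i t : ℕ} (hit : i < t) (ht : t ≤ i + rightRun π i) :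
    t ∈ occBefore π (at1 π i) := by
  have hR : rightRun π i ≠ 0 := by omega
  rw [mem_occBefore]
  exact Nat.findGreatest_of_ne_zero rfl hR t (Finset.mem_Icc.mpr ⟨hit, ht⟩)

theorem add_rightRun_add_one_notMem_occBefore (i : ℕ) :
    i + rightRun π i + 1 ∉ occBefore π (at1 π i) := by
  intro hmem
  by_cases hRn : rightRun π i + 1 ≤ n
  · apply Nat.findGreatest_is_greatest (Nat.lt_succ_self (rightRun π i)) hRn
    intro t ht
    rw [Finset.mem_Icc] at ht
    rw [← mem_occBefore]
    rcases Nat.lt_or_ge t (i + rightRun π i + 1) with h | h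
    · exact mem_occBefore_of_le_rightRun (by omega) (by omega)
    · rwa [show t = i + rightRun π i + 1 by omega]
  · have : at1 π (i + rightRun π i + 1) = 0 := by
      unfold at1; rw [dif_neg (by omega)]
    simp [mem_occBefore, this] at hmem

/-- `leftRun` is defined through a classical decidability instance; instance search does not find
the computable one for this predicate, so it is supplied by hand. -/
theorem leftRun_eq_findGreatest (π : Fin n → ℕ) (i : ℕ) : leftRun π i =
    @Nat.findGreatest (fun x => ∀ t ∈ Finset.Icc (i - x) (i - 1), 0 < at1 π t ∧ at1 π t < at1 π i)
      (fun _ => Finset.decidableDforallFinset) n := by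
  rw [leftRun]
  congr

theorem mem_occBefore_of_sub_leftRun_le {i t : ℕ} (ht : i - leftRun π i ≤ t) (hti : t < i) :
    t ∈ occBefore π (at1 π i) := by
  have hL : leftRun π i ≠ 0 := by omega
  rw [mem_occBefore]
  exact Nat.findGreatest_of_ne_zero (leftRun_eq_findGreatest π i).symm hL t
    (Finset.mem_Icc.mpr ⟨ht, by omega⟩)

theorem sub_leftRun_add_one_notMem_occBefore {i : ℕ} (hin : i ≤ n) :
    i - (leftRun π i + 1) ∉ occBefore π (at1 π i) := by
  intro hmem
  by_cases hLn : leftRun π i + 1 ≤ n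
  · apply Nat.findGreatest_is_greatest (k := leftRun π i + 1)
      (by rw [← leftRun_eq_findGreatest π i]; omega) hLn
    intro t ht
    rw [Finset.mem_Icc] at ht
    rw [← mem_occBefore]
    by_cases h : t = i - (leftRun π i + 1)
    · rwa [h]
    · exact mem_occBefore_of_sub_leftRun_le (by omega) (by omega)
  · have : at1 π (i - (leftRun π i + 1)) = 0 := by
      unfold at1; rw [dif_neg (by omega)]
    simp [mem_occBefore, this] at hmem

theorem rightRun_eq_zero {i : ℕ} (h : at1 π i = 0) : rightRun π i = 0 := by
  by_contra hR
  have := mem_occBefore_of_le_rightRun (π := π) (Nat.lt_succ_self i) (by omega)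
  simp [h, occBefore_zero] at this

theorem leftRun_eq_zero {i : ℕ} (h : at1 π i = 0) : leftRun π i = 0 := by
  by_contra hL
  have hmem : i - 1 ∈ Finset.Icc (i - leftRun π i) (i - 1) := Finset.mem_Icc.mpr ⟨by omega, le_rfl⟩
  have : 0 < at1 π (i - 1) ∧ at1 π (i - 1) < at1 π i :=
    Nat.findGreatest_of_ne_zero (leftRun_eq_findGreatest π i).symm hL (i - 1) hmem
  omega

theorem leftRun_le {i : ℕ} (hi : 1 ≤ i) : leftRun π i ≤ i - 1 := by
  by_contra
  exact zero_notMem_occBefore _ (mem_occBefore_of_sub_leftRun_le (π := π) (i := i) (by omega)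
    (by omega))

theorem add_rightRun_le {i : ℕ} (hin : i ≤ n) : i + rightRun π i ≤ n := by
  by_contra
  have := mem_occBefore_of_le_rightRun (π := π) (t := i + rightRun π i) (by omega) le_rfl
  obtain ⟨x, hx⟩ := exists_eq_val_add_one_of_at1_pos (mem_occBefore.mp this).1
  omega

theorem at1_le_of_mem_SmnSet (hπ : π ∈ SmnSet m n) (s : ℕ) : at1 π s ≤ m := by
  unfold at1
  split_ifs
  exacts [le_of_mem_SmnSet hπ _, Nat.zero_le m]

theorem eq_of_at1_eq (hπ : π ∈ SmnSet m n) {s s' : ℕ} (hs : 0 < at1 π s)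
    (h : at1 π s = at1 π s') : s = s' := by
  obtain ⟨x, rfl⟩ := exists_eq_val_add_one_of_at1_pos hs
  obtain ⟨x', rfl⟩ := exists_eq_val_add_one_of_at1_pos (h ▸ hs)
  simp only [at1_val_add_one] at h hs
  have := (existsUnique_eq_of_mem_SmnSet hπ hs (le_of_mem_SmnSet hπ x)).unique rfl h.symm
  rw [this]

/-- The spot labelled `c` in `π` (`0`, as `sInf ∅`, if there is none). -/
noncomputable def carSpot (π : Fin n → ℕ) (c : ℕ) : ℕ :=
  sInf {s | at1 π s = c}

theorem at1_carSpot (hπ : π ∈ SmnSet m n) {c : ℕ} (h1 : 1 ≤ c) (h2 : c ≤ m) :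
    at1 π (carSpot π c) = c := by
  obtain ⟨x, hx, -⟩ := existsUnique_eq_of_mem_SmnSet hπ h1 h2
  exact Nat.sInf_mem (s := {s | at1 π s = c}) ⟨x + 1, by simp [hx]⟩

theorem carSpot_at1 (hπ : π ∈ SmnSet m n) {s : ℕ} (hs : 0 < at1 π s) : carSpot π (at1 π s) = s :=
  eq_of_at1_eq hπ (by rwa [at1_carSpot hπ hs (at1_le_of_mem_SmnSet hπ s)])
    (at1_carSpot hπ hs (at1_le_of_mem_SmnSet hπ s))

theorem carSpot_mem_Icc (hπ : π ∈ SmnSet m n) {c : ℕ} (h1 : 1 ≤ c) (h2 : c ≤ m) :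
    carSpot π c ∈ Finset.Icc 1 n := by
  obtain ⟨x, hx⟩ := exists_eq_val_add_one_of_at1_pos (π := π) (s := carSpot π c)
    (by rw [at1_carSpot hπ h1 h2]; omega)
  rw [hx, Finset.mem_Icc]
  omega

noncomputable def carSpots (π : Fin n → ℕ) (m : ℕ) : List ℕ :=
  (List.range m).map fun j => carSpot π (j + 1)

@[simp]
theorem length_carSpots (π : Fin n → ℕ) (m : ℕ) : (carSpots π m).length = m := by
  simp [carSpots]

@[simp]
theorem getElem_carSpots (π : Fin n → ℕ) (m : ℕ) {j : ℕ} (hj : j < (carSpots π m).length) :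
    (carSpots π m)[j] = carSpot π (j + 1) := by
  simp [carSpots]

theorem toFinset_take_carSpots (hπ : π ∈ SmnSet m n) {j : ℕ} (hj : j ≤ m) :
    ((carSpots π m).take j).toFinset = occBefore π (j + 1) := by
  ext s
  simp only [carSpots, ← List.map_take, List.take_range, List.mem_toFinset, List.mem_map,
    List.mem_range, mem_occBefore, lt_min_iff]
  constructor
  · rintro ⟨c, hc, rfl⟩
    rw [at1_carSpot hπ (by omega) (by omega)]
    omega
  · rintro ⟨hs, hsj⟩
    exact ⟨at1 π s - 1, ⟨by omega, by omega⟩, by rw [Nat.sub_add_cancel hs, carSpot_at1 hπ hs]⟩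

theorem nodup_carSpots (hπ : π ∈ SmnSet m n) : (carSpots π m).Nodup := by
  refine (List.nodup_range).map_on fun a ha b hb hab => ?_
  rw [List.mem_range] at ha hb
  have := congrArg (at1 π) hab
  rw [at1_carSpot hπ (by omega) (by omega), at1_carSpot hπ (by omega) (by omega)] at this
  omega

theorem outcomeOf_carSpots (hπ : π ∈ SmnSet m n) (x : Fin n) :
    outcomeOf (carSpots π m) (x + 1) = π x := by
  by_cases hx : π x = 0
  · rw [hx]
    apply outcomeOf_eq_zero
    simp only [carSpots, List.mem_map, List.mem_range, not_exists, not_and]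
    intro c hc hspot
    have := at1_carSpot hπ (c := c + 1) (by omega) (by omega)
    rw [hspot, at1_val_add_one] at this
    omega
  · have hpos : 0 < at1 π (x + 1) := by simp; omega
    have hlt : π x - 1 < (carSpots π m).length := by
      have := le_of_mem_SmnSet hπ x
      simp [carSpots]; omega
    have hget : (carSpots π m)[π x - 1] = x + 1 := by
      simpa [carSpots, Nat.sub_add_cancel (Nat.pos_of_ne_zero hx)] using carSpot_at1 hπ hpos
    rw [← hget, outcomeOf_getElem (nodup_carSpots hπ)]
    omega

end Spots

section Counting

variable {k l m n : ℕ} {π : Fin n → ℕ}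

theorem pullRun_eq_some_carSpots_iff (hπ : π ∈ SmnSet m n) (α : Fin m → Fin n) :
    pullRun k l n (prefList α) = some (carSpots π m) ↔
      ∀ j : Fin m, pullTry k l n (occBefore π (j + 1)) (α j + 1) = some (carSpot π (j + 1)) := by
  simp only [pullRun, pullRunAux_eq_some_iff, Finset.empty_union, prefList, List.length_ofFn,
    length_carSpots, true_and, List.getElem_ofFn, getElem_carSpots]
  constructor
  · intro h j
    simpa [toFinset_take_carSpots hπ j.isLt.le] using h j j.isLt j.isLt
  · intro h j hj _
    simpa [toFinset_take_carSpots hπ hj.le] using h ⟨j, hj⟩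

theorem eq_carSpots_of_pullRun_eq_some (hπ : π ∈ SmnSet m n) {α : Fin m → Fin n} {t : List ℕ}
    (h : pullRun k l n (prefList α) = some t) (hout : pullOutcome k l n α = π) :
    t = carSpots π m := by
  have hprefs : ∀ a ∈ prefList α, 1 ≤ a ∧ a ≤ n := by
    simp only [prefList, List.mem_ofFn, forall_exists_index]
    rintro _ j rfl
    exact ⟨Nat.le_add_left 1 _, (α j).isLt⟩
  obtain ⟨hnd, hbounds⟩ := pullRunAux_empty_spots h hprefs
  have hlen : t.length = m := by
    simpa [prefList] using (pullRunAux_eq_some_iff.mp h).1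
  refine List.ext_getElem (by simp [hlen]) fun j hj _ => ?_
  have hspot := hbounds j hj
  have hat1 : at1 π t[j] = j + 1 := by
    have := congrFun hout ⟨t[j] - 1, by omega⟩
    rw [pullOutcome, h, Option.getD_some, Nat.sub_add_cancel hspot.1,
      outcomeOf_getElem hnd] at this
    rw [at1, dif_pos ⟨hspot.1, hspot.2⟩, ← this]
  rw [getElem_carSpots, ← hat1, carSpot_at1 hπ (by omega)]

theorem mem_pullPFs_and_pullOutcome_eq_iff (hπ : π ∈ SmnSet m n) (α : Fin m → Fin n) :
    α ∈ pullPFs k l m n ∧ pullOutcome k l n α = π ↔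
      pullRun k l n (prefList α) = some (carSpots π m) := by
  constructor
  · rintro ⟨hα, hout⟩
    obtain ⟨t, ht⟩ := Option.isSome_iff_exists.mp (Finset.mem_filter.mp hα).2
    rwa [← eq_carSpots_of_pullRun_eq_some hπ ht hout]
  · intro h
    refine ⟨Finset.mem_filter.mpr ⟨Finset.mem_univ _, by simp [h]⟩, funext fun x => ?_⟩
    simp [pullOutcome, h, outcomeOf_carSpots hπ]

theorem filter_pullOutcome_eq_piFinset (hπ : π ∈ SmnSet m n) :
    (pullPFs k l m n).filter (fun α => pullOutcome k l n α = π) =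
      Fintype.piFinset fun j : Fin m => Finset.univ.filter fun v : Fin n =>
        pullTry k l n (occBefore π (j + 1)) (v + 1) = some (carSpot π (j + 1)) := by
  ext α
  rw [Finset.mem_filter, mem_pullPFs_and_pullOutcome_eq_iff hπ, pullRun_eq_some_carSpots_iff hπ,
    Fintype.mem_piFinset]
  simp only [Finset.mem_filter, Finset.mem_univ, true_and]

theorem card_filter_val_add_one_mem_Icc {lo hi : ℕ} (hlo : 1 ≤ lo) (hhi : hi ≤ n) :
    (Finset.univ.filter fun v : Fin n => lo ≤ v + 1 ∧ v + 1 ≤ hi).card = hi + 1 - lo := by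
  rw [← Nat.card_Icc]
  refine Finset.card_bij (fun v _ => v + 1) (fun v hv => by simpa using hv)
    (fun v _ w _ h => Fin.ext (by simpa using h)) fun b hb => ?_
  rw [Finset.mem_Icc] at hb
  exact ⟨⟨b - 1, by omega⟩, by simp; omega, by simp; omega⟩

theorem card_filter_pullTry_eq_some {i : ℕ} (hi1 : 1 ≤ i) (hin : i ≤ n) :
    (Finset.univ.filter fun v : Fin n =>
        pullTry k l n (occBefore π (at1 π i)) (v + 1) = some i).card =
      Bval k π i + Fval k l π i + 1 := by
  have hinterval := pullTry_eq_some_iff_mem_Icc (k := k) (l := l) (occ := occBefore π (at1 π i))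
    hi1 hin (by simp [mem_occBefore]) (zero_notMem_occBefore _)
    (fun _ => mem_occBefore_of_le_rightRun) (add_rightRun_add_one_notMem_occBefore i)
    (fun _ => mem_occBefore_of_sub_leftRun_le) (sub_leftRun_add_one_notMem_occBefore hin)
  simp_rw [hinterval]
  have hF : forwardReach k l i (leftRun π i) ≤ i - 1 := by
    have := leftRun_le (π := π) hi1
    unfold forwardReach; split_ifs <;> omega
  have hB := add_rightRun_le (π := π) hin
  have hFval : Fval k l π i = forwardReach k l i (leftRun π i) := rfl
  rw [card_filter_val_add_one_mem_Icc (by omega) (by omega), Bval, hFval]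
  omega

theorem prod_carSpot_eq_prod_Icc {M : Type*} [CommMonoid M] (hπ : π ∈ SmnSet m n) (g : ℕ → M)
    (hg : ∀ i, at1 π i = 0 → g i = 1) :
    ∏ j : Fin m, g (carSpot π (j + 1)) = ∏ i ∈ Finset.Icc 1 n, g i := by
  refine Finset.prod_bij_ne_one (fun j _ _ => carSpot π (j + 1))
    (fun j _ _ => carSpot_mem_Icc hπ (by omega) j.isLt) (fun j _ _ j' _ _ h => ?_)
    (fun i _ hgi => ?_) fun _ _ _ => rfl
  · have := congrArg (at1 π) h
    rw [at1_carSpot hπ (by omega) j.isLt, at1_carSpot hπ (by omega) j'.isLt] at this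
    exact Fin.ext (by omega)
  · have hpos : 0 < at1 π i := Nat.pos_of_ne_zero fun h0 => hgi (hg i h0)
    have hle := at1_le_of_mem_SmnSet hπ i
    refine ⟨⟨at1 π i - 1, by omega⟩, Finset.mem_univ _, ?_, ?_⟩ <;>
      simp only [Nat.sub_add_cancel hpos, carSpot_at1 hπ hpos]
    exact hgi

end Counting

theorem stmt14_general (k l m n : ℕ) (π : Fin n → ℕ)
    (hπ : π ∈ SmnSet m n) :
    ((pullPFs k l m n).filter (fun α => pullOutcome k l n α = π)).card
      = ∏ i ∈ Finset.Icc 1 n, (Bval k π i + Fval k l π i + 1) := by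
  rw [filter_pullOutcome_eq_piFinset hπ, Fintype.card_piFinset]
  calc _ = ∏ j : Fin m,
          (Bval k π (carSpot π (j + 1)) + Fval k l π (carSpot π (j + 1)) + 1) :=
        Finset.prod_congr rfl fun j _ => by
          have hi := Finset.mem_Icc.mp (carSpot_mem_Icc hπ (Nat.le_add_left 1 j) j.isLt)
          have := card_filter_pullTry_eq_some (k := k) (l := l) (π := π) hi.1 hi.2
          rwa [at1_carSpot hπ (Nat.le_add_left 1 j) j.isLt] at this
    _ = _ := prod_carSpot_eq_prod_Icc hπ (fun i => Bval k π i + Fval k l π i + 1) fun i hi => by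
        simp [Bval, Fval, rightRun_eq_zero hi, leftRun_eq_zero hi]

theorem stmt14 (k l m n : ℕ) (hm : m ≤ n) (π : Fin n → ℕ)
    (hπ : π ∈ SmnSet m n) :
    ((pullPFs k l m n).filter (fun α => pullOutcome k l n α = π)).card
      = ∏ i ∈ Finset.Icc 1 n, (Bval k π i + Fval k l π i + 1) :=
  stmt14_general k l m n π hπ
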